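/- arXiv:2306.05415 — 4 statements merged into one kernel-verified Lean document; each statement's English description precedes it below -/
import Mathlib

section
/- Every bijective TMI map on ℝ^d has an inverse that is again a TMI map. -/
/-- `f : ℝ^d → ℝ^d` is triangular monotone increasing (TMI): each component `f_i`
depends only on the coordinates `x_1, …, x_i`, and is strictly increasing in `x_i`. -/
def TMI {d : ℕ} (f : (Fin d → ℝ) → (Fin d → ℝ)) : Prop :=
  (∀ i : Fin d, ∀ x y : Fin d → ℝ, (∀ j, j ≤ i → x j = y j) → f x i = f y i) ∧
  (∀ i : Fin d, ∀ x : Fin d → ℝ,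
    StrictMono fun t : ℝ => f (Function.update x i t) i)

lemma TMI.inv_aux {d : ℕ} {f g : (Fin d → ℝ) → (Fin d → ℝ)}
    (hf : TMI f) (hgr : Function.RightInverse g f) :
    ∀ (m : ℕ) (j : Fin d), (j : ℕ) ≤ m → ∀ y z : Fin d → ℝ,
      (∀ k, k ≤ j → y k = z k) → g y j = g z j := by
  intro m
  induction m using Nat.strong_induction_on with
  | _ m ih =>
    intro j hj y z hyz
    have hlt : ∀ k : Fin d, k < j → g y k = g z k := by
      intro k hk
      exact ih (k : ℕ) (lt_of_lt_of_le (show (k : ℕ) < (j : ℕ) from hk) hj) k le_rfl y z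
        (fun k' hk' => hyz k' (le_trans hk' hk.le))
    have h3 : f (g y) j = f (Function.update (g z) j (g y j)) j := by
      apply hf.1 j
      intro k hk
      rcases eq_or_lt_of_le hk with h | h
      · rw [h, Function.update_self]
      · rw [Function.update_of_ne (ne_of_lt h)]
        exact hlt k h
    have key : f (Function.update (g z) j (g y j)) j
        = f (Function.update (g z) j (g z j)) j := by
      rw [← h3, Function.update_eq_self, hgr y, hgr z]
      exact hyz j le_rfl
    exact (hf.2 j (g z)).injective key

/-- Every bijective TMI map on `ℝ^d` has an inverse that is again a TMI map. -/
theorem TMI.inverse {d : ℕ} {f g : (Fin d → ℝ) → (Fin d → ℝ)}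
    (hf : TMI f) (hbij : Function.Bijective f)
    (hgl : Function.LeftInverse g f) (hgr : Function.RightInverse g f) :
    TMI g := by
  constructor
  · intro i y z hyz
    exact TMI.inv_aux hf hgr (i : ℕ) i le_rfl y z hyz
  · intro i x s t hst
    set u := g (Function.update x i s) with hu
    set v := g (Function.update x i t) with hv
    have hlt : ∀ k : Fin d, k < i → u k = v k := by
      intro k hk
      refine TMI.inv_aux hf hgr (k : ℕ) k le_rfl _ _ ?_
      intro k' hk'
      have hne : k' ≠ i := ne_of_lt (lt_of_le_of_lt hk' hk)
      rw [Function.update_of_ne hne, Function.update_of_ne hne]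
    have h1 : f u i = s := by rw [hu, hgr, Function.update_self]
    have h2 : f v i = t := by rw [hv, hgr, Function.update_self]
    have h3 : f u i = f (Function.update v i (u i)) i := by
      apply hf.1 i
      intro k hk
      rcases eq_or_lt_of_le hk with h | h
      · rw [h, Function.update_self]
      · rw [Function.update_of_ne (ne_of_lt h)]
        exact hlt k h
    have h4 : f v i = f (Function.update v i (v i)) i := by
      rw [Function.update_eq_self]
    have hfin : f (Function.update v i (u i)) i < f (Function.update v i (v i)) i := by
      rw [← h3, ← h4, h1, h2]; exact hst
    exact (hf.2 i v).lt_iff_lt.mp hfin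
end

section
/- Let f : ℝ^d → ℝ^d be defined recursively by x_i = f̃_i(x_{pa(i)}, u_i), where pa(i) ⊆ {1,…,i-1} and each f̃_i is continuous and strictly increasing in u_i with range ℝ. Then the induced map u ↦ x is a well-defined bijection of ℝ^d whose inverse has i-th component depending only on x_{pa(i)} and x_i. -/
private def mkSCM {d : ℕ} (F : Fin d → (Fin d → ℝ) → ℝ → ℝ) (u : Fin d → ℝ) (i : Fin d) : ℝ :=
  F i (fun j => if h : j.val < i.val then mkSCM F u j else 0) (u i)
termination_by i.val

/-- An acyclic SCM with mechanisms `x_i = F i (x_{pa i}) (u_i)`, where `pa i ⊆ {1,…,i-1}`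
and each mechanism is continuous, strictly increasing in `u_i`, and has range all of `ℝ`,
induces a unique well-defined map `u ↦ x`; this map is a bijection of `ℝ^d`, and any
inverse of it has `i`-th component depending only on `x_{pa i}` and `x_i`. -/
theorem scm_induces_bijective_tmi {d : ℕ}
    (pa : Fin d → Finset (Fin d)) (hpa : ∀ i, ∀ j ∈ pa i, j < i)
    (F : Fin d → (Fin d → ℝ) → ℝ → ℝ)
    (hdep : ∀ i : Fin d, ∀ x y : Fin d → ℝ, ∀ u : ℝ,
      (∀ j ∈ pa i, x j = y j) → F i x u = F i y u)
    (hmono : ∀ i x, StrictMono (F i x))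
    (hcont : ∀ i x, Continuous (F i x))
    (hsurj : ∀ i x, Function.Surjective (F i x)) :
    ∃ f : (Fin d → ℝ) → (Fin d → ℝ),
      (∀ u i, f u i = F i (f u) (u i)) ∧
      (∀ f' : (Fin d → ℝ) → (Fin d → ℝ),
        (∀ u i, f' u i = F i (f' u) (u i)) → f' = f) ∧
      Function.Bijective f ∧
      (∀ g : (Fin d → ℝ) → (Fin d → ℝ),
        Function.LeftInverse g f → Function.RightInverse g f →
        ∀ i : Fin d, ∀ x y : Fin d → ℝ,
          (∀ j, (j ∈ pa i ∨ j = i) → x j = y j) → g x i = g y i) := by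
  set f : (Fin d → ℝ) → (Fin d → ℝ) := mkSCM F with hf
  have heq : ∀ u i, f u i = F i (f u) (u i) := by
    intro u i
    rw [hf, mkSCM]
    apply hdep
    intro j hj
    simp [hpa i j hj]
  have huniq : ∀ f' : (Fin d → ℝ) → (Fin d → ℝ),
      (∀ u i, f' u i = F i (f' u) (u i)) → f' = f := by
    intro f' hf'
    funext u i
    have : ∀ n : ℕ, ∀ i : Fin d, i.val < n → f' u i = f u i := by
      intro n
      induction n with
      | zero => omega
      | succ n ih =>
        intro i hi
        rw [hf' u i, heq u i]
        apply hdep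
        intro j hj
        exact ih j (by have := hpa i j hj; omega)
    exact this (i.val + 1) i (by omega)
  -- inverse
  set g : (Fin d → ℝ) → (Fin d → ℝ) :=
    fun x i => Classical.choose (hsurj i x (x i)) with hg
  have hgspec : ∀ x i, F i x (g x i) = x i := fun x i =>
    Classical.choose_spec (hsurj i x (x i))
  have hfg : ∀ x, f (g x) = x := by
    intro x
    funext i
    have : ∀ n : ℕ, ∀ i : Fin d, i.val < n → f (g x) i = x i := by
      intro n
      induction n with
      | zero => omega
      | succ n ih =>
        intro i hi
        rw [heq (g x) i]
        have : F i (f (g x)) (g x i) = F i x (g x i) := by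
          apply hdep
          intro j hj
          exact ih j (by have := hpa i j hj; omega)
        rw [this, hgspec]
    exact this (i.val + 1) i (by omega)
  have hgf : ∀ u, g (f u) = u := by
    intro u
    funext i
    apply (hmono i (f u)).injective
    rw [hgspec (f u) i, ← heq u i]
  refine ⟨f, heq, huniq, ?_, ?_⟩
  · exact Function.bijective_iff_has_inverse.2 ⟨g, hgf, hfg⟩
  · intro G hGl hGr i x y hxy
    apply (hmono i x).injective
    have hx : F i x (G x i) = x i := by
      have h1 := heq (G x) i
      rw [hGr x] at h1
      exact h1.symm
    have hy : F i x (G y i) = y i := by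
      have h2 : F i x (G y i) = F i y (G y i) := by
        apply hdep; intro j hj; exact hxy j (Or.inl hj)
      have h1 := heq (G y) i
      rw [hGr y] at h1
      rw [h2]; exact h1.symm
    rw [hx, hy, hxy i (Or.inr rfl)]
end

section
/- Suppose T : ℝ^d → ℝ^d is a diffeomorphism such that T(f(u)) = h(u) for all u, where f is a bijective TMI map with differentiable inverse whose i-th inverse component depends only on x_{pa(i)} ∪ {i}, and h is component-wise with h_i'(u_i) ≠ 0. Then the i-th component of T(x) depends only on x_j for j ∈ pa(i) ∪ {i}; in particular ∂T_i/∂x_j = 0 whenever j ∉ pa(i) ∪ {i}. -/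
/-!
Substituting `u = g x` in `T (f u) = h u` gives `T x i = H i (g x i)`, so the `i`-th component
of `T` inherits the dependence pattern of the `i`-th component of `g`. A function that does not
depend on `x_j` is constant along the line `t ↦ x + t • e_j`, so its derivative in the
direction `e_j` vanishes.
-/

section LineDeriv

variable {𝕜 : Type*} [NontriviallyNormedField 𝕜]
  {E : Type*} [NormedAddCommGroup E] [NormedSpace 𝕜 E]
  {F : Type*} [NormedAddCommGroup F] [NormedSpace 𝕜 F]

theorem fderiv_apply_eq_zero_of_forall_add_smul_eq {φ : E → F} {x v : E}
    (h : ∀ t : 𝕜, φ (x + t • v) = φ x) : fderiv 𝕜 φ x v = 0 := by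
  by_cases hφ : DifferentiableAt 𝕜 φ x
  · rw [← hφ.lineDeriv_eq_fderiv, lineDeriv, funext h, deriv_const]
  · rw [fderiv_zero_of_not_differentiableAt hφ, zero_apply]

end LineDeriv

namespace DependsOn

variable {𝕜 : Type*} [NontriviallyNormedField 𝕜] {ι : Type*} [DecidableEq ι]
  {F : Type*} [NormedAddCommGroup F] [NormedSpace 𝕜 F]

theorem apply_add_smul_single {β : Type*} {φ : (ι → 𝕜) → β} {s : Set ι}
    (hφ : DependsOn φ s) {j : ι} (hj : j ∉ s) (x : ι → 𝕜) (t : 𝕜) :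
    φ (x + t • Pi.single j 1) = φ x := by
  refine hφ fun k hk => ?_
  have hkj : k ≠ j := ne_of_mem_of_not_mem hk hj
  simp [hkj]

theorem fderiv_single_eq_zero [Fintype ι] {φ : (ι → 𝕜) → F} {s : Set ι}
    (hφ : DependsOn φ s) {j : ι} (hj : j ∉ s) (x : ι → 𝕜) :
    fderiv 𝕜 φ x (Pi.single j 1) = 0 :=
  fderiv_apply_eq_zero_of_forall_add_smul_eq (hφ.apply_add_smul_single hj x)

end DependsOn

theorem causal_consistency_forward_general {d : ℕ}
    (pa : Fin d → Finset (Fin d))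
    (f g : (Fin d → ℝ) → (Fin d → ℝ))
    (hgr : Function.RightInverse g f)
    (hgdep : ∀ i : Fin d, ∀ x y : Fin d → ℝ,
      (∀ j, (j ∈ pa i ∨ j = i) → x j = y j) → g x i = g y i)
    (H : Fin d → ℝ → ℝ)
    (T : (Fin d → ℝ) → (Fin d → ℝ)) (hTdiff : Differentiable ℝ T)
    (hTf : ∀ u : Fin d → ℝ, T (f u) = fun i => H i (u i)) :
    (∀ i : Fin d, ∀ x y : Fin d → ℝ,
      (∀ j, (j ∈ pa i ∨ j = i) → x j = y j) → T x i = T y i) ∧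
    (∀ x : Fin d → ℝ, ∀ i j : Fin d, j ∉ pa i → j ≠ i →
      fderiv ℝ T x (Pi.single j 1) i = 0) := by
  have hT : ∀ x i, T x i = H i (g x i) := fun x i => by
    rw [← hgr x, hTf, hgr x]
  have hdep : ∀ i, DependsOn (fun x => T x i) {j | j ∈ pa i ∨ j = i} := fun i x y hxy => by
    simp only [hT, hgdep i x y hxy]
  refine ⟨fun i _ _ hxy => hdep i hxy, fun x i j hj hji => ?_⟩
  have hcomp :
      fderiv ℝ T x (Pi.single j 1) i = fderiv ℝ (fun y => T y i) x (Pi.single j 1) := by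
    rw [fderiv_apply (hTdiff x) i]
    rfl
  rw [hcomp]
  exact (hdep i).fderiv_single_eq_zero (by simp [hj, hji]) x

/-- Causal consistency: suppose `T : ℝ^d → ℝ^d` is differentiable and satisfies
`T (f u) = h u` for all `u`, where `f` is a bijection with (differentiable) inverse `g`
whose `i`-th component depends only on the coordinates `pa i ∪ {i}`, and
`h u i = H i (u i)` is component-wise with `(H i)' ≠ 0`.  Then the `i`-th component of
`T` depends only on the coordinates `x_j` for `j ∈ pa i ∪ {i}`; in particular the
partial derivative `∂T_i/∂x_j` vanishes whenever `j ∉ pa i ∪ {i}`. -/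
theorem causal_consistency_forward {d : ℕ}
    (pa : Fin d → Finset (Fin d))
    (f g : (Fin d → ℝ) → (Fin d → ℝ))
    (hbij : Function.Bijective f)
    (hgl : Function.LeftInverse g f) (hgr : Function.RightInverse g f)
    (hgdiff : Differentiable ℝ g)
    (hgdep : ∀ i : Fin d, ∀ x y : Fin d → ℝ,
      (∀ j, (j ∈ pa i ∨ j = i) → x j = y j) → g x i = g y i)
    (H : Fin d → ℝ → ℝ)
    (hH : ∀ i, Differentiable ℝ (H i)) (hH' : ∀ i t, deriv (H i) t ≠ 0)
    (T : (Fin d → ℝ) → (Fin d → ℝ)) (hTdiff : Differentiable ℝ T)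
    (hTf : ∀ u : Fin d → ℝ, T (f u) = fun i => H i (u i)) :
    (∀ i : Fin d, ∀ x y : Fin d → ℝ,
      (∀ j, (j ∈ pa i ∨ j = i) → x j = y j) → T x i = T y i) ∧
    (∀ x : Fin d → ℝ, ∀ i j : Fin d, j ∉ pa i → j ≠ i →
      fderiv ℝ T x (Pi.single j 1) i = 0) :=
  causal_consistency_forward_general pa f g hgr hgdep H T hTdiff hTf
end

section
/- Under the same hypotheses (T ∘ f = h component-wise invertible and differentiable), the Jacobian of T^{-1} with respect to u satisfies: the (i,j) entry of ∇_u T^{-1}(u) is zero whenever j is not an ancestor of i in the causal graph and j ≠ i. -/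
/-! Since every `H k` is surjective, `S x i` inherits from `f u i` the property of depending only
on the coordinates of the ancestors of `i` and of `i` itself. A function that does not depend on
the `j`-th coordinate is constant along the `j`-th coordinate line, so its derivative in that
direction vanishes. -/

open Function

lemma DependsOn.of_comp_piMap {ι γ : Type*} {α β : ι → Type*} {H : ∀ k, α k → β k}
    (hH : ∀ k, Surjective (H k)) {g : (∀ k, β k) → γ} {s : Set ι}
    (hg : DependsOn (g ∘ Pi.map H) s) : DependsOn g s := by
  intro x y hxy
  have hx : Pi.map H (fun k => surjInv (hH k) (x k)) = x := funext fun k => surjInv_eq _ _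
  have hy : Pi.map H (fun k => surjInv (hH k) (y k)) = y := funext fun k => surjInv_eq _ _
  rw [← hx, ← hy]
  exact hg fun k hk => by simp only [hxy k hk]

section Derivatives

variable {𝕜 : Type*} [NontriviallyNormedField 𝕜] {ι : Type*}

lemma DependsOn.fderiv_apply_single_eq_zero [Fintype ι] [DecidableEq ι] {E F : Type*}
    [NormedAddCommGroup E] [NormedSpace 𝕜 E] [NormedAddCommGroup F] [NormedSpace 𝕜 F]
    {g : (ι → E) → F} {s : Set ι} (hg : DependsOn g s) {j : ι} (hj : j ∉ s)
    (x : ι → E) (v : E) : fderiv 𝕜 g x (Pi.single j v : ι → E) = 0 := by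
  by_cases hgx : DifferentiableAt 𝕜 g x
  · have hline : (fun t : 𝕜 => g (x + t • (Pi.single j v : ι → E))) = fun _ => g x := by
      funext t
      refine hg fun k hk => ?_
      have hkj : k ≠ j := ne_of_mem_of_not_mem hk hj
      simp [Pi.single_eq_of_ne hkj]
    rw [← hgx.lineDeriv_eq_fderiv, lineDeriv, hline, deriv_const]
  · simp [fderiv_zero_of_not_differentiableAt hgx]

lemma fderiv_apply_eq_zero_of_fderiv_coord {E : Type*} [NormedAddCommGroup E] [NormedSpace 𝕜 E]
    {F : ι → Type*} [∀ k, NormedAddCommGroup (F k)] [∀ k, NormedSpace 𝕜 (F k)]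
    {Φ : E → ∀ k, F k} {x v : E} {i : ι} (h : fderiv 𝕜 (fun y => Φ y i) x v = 0) :
    fderiv 𝕜 Φ x v i = 0 := by
  by_cases hΦ : DifferentiableAt 𝕜 Φ x
  · simpa [fderiv_apply hΦ] using h
  · simp [fderiv_zero_of_not_differentiableAt hΦ]

end Derivatives

theorem causal_consistency_inverse_general {d : ℕ}
    (pa : Fin d → Finset (Fin d))
    (f : (Fin d → ℝ) → (Fin d → ℝ))
    (hfdep : ∀ i : Fin d, ∀ u v : Fin d → ℝ,
      (∀ j, (Relation.TransGen (fun a b : Fin d => a ∈ pa b) j i ∨ j = i) →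
        u j = v j) → f u i = f v i)
    (H : Fin d → ℝ → ℝ)
    (hHbij : ∀ i, Function.Bijective (H i))
    (S : (Fin d → ℝ) → (Fin d → ℝ))
    (hSh : ∀ u : Fin d → ℝ, S (fun i => H i (u i)) = f u) :
    ∀ u : Fin d → ℝ, ∀ i j : Fin d,
      ¬ Relation.TransGen (fun a b : Fin d => a ∈ pa b) j i → j ≠ i →
      fderiv ℝ S u (Pi.single j 1) i = 0 := by
  intro u i j hanc hne
  have hSi : DependsOn (fun x => S x i)
      {k | Relation.TransGen (fun a b : Fin d => a ∈ pa b) k i ∨ k = i} :=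
    DependsOn.of_comp_piMap (fun k => (hHbij k).surjective) fun u v huv => by
      show S (fun k => H k (u k)) i = S (fun k => H k (v k)) i
      rw [hSh, hSh]
      exact hfdep i u v huv
  exact fderiv_apply_eq_zero_of_fderiv_coord
    (hSi.fderiv_apply_single_eq_zero (by simp [hanc, hne]) u 1)

/-- Causal consistency of the inverse: suppose `S = T⁻¹` is differentiable and satisfies
`S (h u) = f u` for all `u`, where each `f_i` depends only on the `u_j` for `j` an
ancestor of `i` in the causal graph (given by the parent sets `pa`) or `j = i`, and
`h u i = H i (u i)` is a component-wise diffeomorphism.  Then the `(i,j)` entry of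
`∇_u T⁻¹(u)` is zero whenever `j` is not an ancestor of `i` and `j ≠ i`. -/
theorem causal_consistency_inverse {d : ℕ}
    (pa : Fin d → Finset (Fin d))
    (f : (Fin d → ℝ) → (Fin d → ℝ))
    (hfdep : ∀ i : Fin d, ∀ u v : Fin d → ℝ,
      (∀ j, (Relation.TransGen (fun a b : Fin d => a ∈ pa b) j i ∨ j = i) →
        u j = v j) → f u i = f v i)
    (H : Fin d → ℝ → ℝ)
    (hHbij : ∀ i, Function.Bijective (H i))
    (hH : ∀ i, Differentiable ℝ (H i)) (hH' : ∀ i t, deriv (H i) t ≠ 0)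
    (T S : (Fin d → ℝ) → (Fin d → ℝ))
    (hSl : Function.LeftInverse S T) (hSr : Function.RightInverse S T)
    (hSdiff : Differentiable ℝ S)
    (hSh : ∀ u : Fin d → ℝ, S (fun i => H i (u i)) = f u) :
    ∀ u : Fin d → ℝ, ∀ i j : Fin d,
      ¬ Relation.TransGen (fun a b : Fin d => a ∈ pa b) j i → j ≠ i →
      fderiv ℝ S u (Pi.single j 1) i = 0 :=
  causal_consistency_inverse_general pa f hfdep H hHbij S hSh
end
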